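/- Let F be a field of characteristic zero, A the n×n regular nilpotent Jordan block, 0 < i < n, and M an n×n matrix with M_{k,l} = 0 unless k ≤ i and l > i. If there exists a nilpotent matrix B with [A, B] = M, then M_{i, i+1} = 0. -/

import Mathlib

open Matrix

/-- The `n × n` regular nilpotent Jordan block: `1`s on the first superdiagonal. -/
def jordanBlock (F : Type*) [Field F] (n : ℕ) : Matrix (Fin n) (Fin n) F :=
  Matrix.of fun k l => if (l : ℕ) = (k : ℕ) + 1 then 1 else 0

/-! The commutator `[A, B]` vanishes on and below the diagonal, which forces `B` to be
upper triangular (induction along the columns); being nilpotent, `B` then has zero diagonal,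
and `[A, B]_{i-1,i} = B_{i,i} - B_{i-1,i-1}`. -/

namespace Matrix

theorem IsUpperTriangular.diag_eq_zero_of_isNilpotent {R n : Type*} [CommRing R] [IsDomain R]
    [Fintype n] [DecidableEq n] [LinearOrder n] {B : Matrix n n R}
    (hB : B.IsUpperTriangular) (hnil : IsNilpotent B) (k : n) : B k k = 0 := by
  have hchar : B.charpoly = Polynomial.X ^ Fintype.card n :=
    sub_eq_zero.mp (isNilpotent_charpoly_sub_pow_of_isNilpotent hnil).eq_zero
  have hroot : (B.charpoly).eval (B k k) = 0 := by
    rw [charpoly_of_isUpperTriangular B hB, Polynomial.eval_prod]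
    exact Finset.prod_eq_zero (Finset.mem_univ k) (by simp)
  rw [hchar, Polynomial.eval_pow, Polynomial.eval_X] at hroot
  exact pow_eq_zero_iff (Fintype.card_pos_iff.mpr ⟨k⟩).ne' |>.mp hroot

end Matrix

section JordanBlock

variable {F : Type*} [Field F] {n : ℕ}

theorem jordanBlock_mul_apply (B : Matrix (Fin n) (Fin n) F) {k k' : Fin n}
    (hk : (k' : ℕ) = k + 1) (l : Fin n) : (jordanBlock F n * B) k l = B k' l := by
  rw [mul_apply, Finset.sum_eq_single k']
  · simp [jordanBlock, hk]
  · intro j _ hj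
    simp [jordanBlock, ← hk, Fin.val_inj, hj]
  · simp

theorem mul_jordanBlock_apply (B : Matrix (Fin n) (Fin n) F) (k : Fin n) {l l' : Fin n}
    (hl : (l : ℕ) = l' + 1) : (B * jordanBlock F n) k l = B k l' := by
  rw [mul_apply, Finset.sum_eq_single l']
  · simp [jordanBlock, hl]
  · intro j _ hj
    have : (l : ℕ) ≠ j + 1 := fun h => hj (Fin.ext (by omega))
    simp [jordanBlock, this]
  · simp

theorem mul_jordanBlock_apply_of_val_eq_zero (B : Matrix (Fin n) (Fin n) F) (k : Fin n)
    {l : Fin n} (hl : (l : ℕ) = 0) : (B * jordanBlock F n) k l = 0 := by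
  simp [mul_apply, jordanBlock, hl]

theorem isUpperTriangular_of_strictlyUpper_commutator_jordanBlock {B : Matrix (Fin n) (Fin n) F}
    (hB : ∀ k l : Fin n, l ≤ k → (jordanBlock F n * B - B * jordanBlock F n) k l = 0) :
    B.IsUpperTriangular := by
  suffices ∀ m : ℕ, ∀ k l : Fin n, (l : ℕ) = m → l < k → B k l = 0 from
    fun k l hlk => this l k l rfl hlk
  intro m
  induction m with
  | zero =>
    intro k l hl hlk
    let k' : Fin n := ⟨k - 1, by omega⟩
    have h := hB k' l (by rw [Fin.le_def]; simp [k', hl])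
    rwa [Matrix.sub_apply, jordanBlock_mul_apply B (k' := k) (by simp [k']; omega),
      mul_jordanBlock_apply_of_val_eq_zero B k' hl, sub_zero] at h
  | succ m ih =>
    intro k l hl hlk
    let k' : Fin n := ⟨k - 1, by omega⟩
    let l' : Fin n := ⟨m, by omega⟩
    have h := hB k' l (by rw [Fin.le_def]; simp [k']; omega)
    rwa [Matrix.sub_apply, jordanBlock_mul_apply B (k' := k) (by simp [k']; omega),
      mul_jordanBlock_apply B k' (l' := l') hl,
      ih k' l' rfl (by rw [Fin.lt_def]; simp [k', l']; omega), sub_zero] at h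

end JordanBlock

theorem stmt_13 (F : Type*) [Field F] (n i : ℕ) (hi : 0 < i) (hin : i < n)
    (M B : Matrix (Fin n) (Fin n) F)
    (hM : ∀ k l : Fin n, ¬((k : ℕ) < i ∧ i ≤ (l : ℕ)) → M k l = 0)
    (hBnil : IsNilpotent B)
    (hB : jordanBlock F n * B - B * jordanBlock F n = M) :
    M ⟨i - 1, by omega⟩ ⟨i, by omega⟩ = 0 := by
  have hupper : B.IsUpperTriangular := isUpperTriangular_of_strictlyUpper_commutator_jordanBlock
    fun k l hlk => hB ▸ hM k l fun ⟨hki, hil⟩ => by rw [Fin.le_def] at hlk; omega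
  have hdiag := hupper.diag_eq_zero_of_isNilpotent hBnil
  rw [← hB, Matrix.sub_apply, jordanBlock_mul_apply B (k' := ⟨i, hin⟩) (by simp; omega),
    mul_jordanBlock_apply B _ (l' := ⟨i - 1, by omega⟩) (by simp; omega), hdiag, hdiag, sub_zero]
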